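/- For the diagonal 2×2 operator matrix diag(T₁₁, T₂₂) on H₁ ⊕ H₂, dw(diag(T₁₁,T₂₂)) ≤ max{w(T₁₁) + ‖T₁₁‖², w(T₂₂) + ‖T₂₂‖²}. -/

import Mathlib

/-!
For a unit vector `x = (x₁, x₂)` one has `‖x₁‖² + ‖x₂‖² = 1`, and the block diagonal operator `D`
splits both quantities in the Davis–Wielandt radius:
`⟪D x, x⟫ = ⟪T₁₁ x₁, x₁⟫ + ⟪T₂₂ x₂, x₂⟫` and `‖D x‖² = ‖T₁₁ x₁‖² + ‖T₂₂ x₂‖²`.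
Homogeneity gives `|⟪T x, x⟫| + ‖T x‖² ≤ (w(T) + ‖T‖²) ‖x‖²` for each block, so
`|⟪D x, x⟫| + ‖D x‖²` is at most a convex combination of the two bounds, hence at most their
maximum; finally `√(a² + b²) ≤ a + b` for `a, b ≥ 0`.
-/

open scoped InnerProductSpace

variable {H₁ H₂ : Type*} [NormedAddCommGroup H₁] [InnerProductSpace ℂ H₁] [CompleteSpace H₁]
  [NormedAddCommGroup H₂] [InnerProductSpace ℂ H₂] [CompleteSpace H₂]

noncomputable def numRadius {E : Type*} [NormedAddCommGroup E] [InnerProductSpace ℂ E]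
    (S : E →L[ℂ] E) : ℝ :=
  ⨆ x : {x : E // ‖x‖ = 1}, ‖(⟪S x.1, x.1⟫_ℂ : ℂ)‖

noncomputable def dwRadius {E : Type*} [NormedAddCommGroup E] [InnerProductSpace ℂ E]
    (S : E →L[ℂ] E) : ℝ :=
  ⨆ x : {x : E // ‖x‖ = 1}, Real.sqrt (‖(⟪S x.1, x.1⟫_ℂ : ℂ)‖ ^ 2 + ‖S x.1‖ ^ 4)

/-- The 2×2 block operator matrix `[[T₁₁, T₁₂], [T₂₁, T₂₂]]` on `H₁ ⊕ H₂`. -/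
noncomputable def blockOp2 (T₁₁ : H₁ →L[ℂ] H₁) (T₁₂ : H₂ →L[ℂ] H₁)
    (T₂₁ : H₁ →L[ℂ] H₂) (T₂₂ : H₂ →L[ℂ] H₂) :
    WithLp 2 (H₁ × H₂) →L[ℂ] WithLp 2 (H₁ × H₂) :=
  ((WithLp.prodContinuousLinearEquiv 2 ℂ H₁ H₂).symm : H₁ × H₂ →L[ℂ] WithLp 2 (H₁ × H₂)) ∘L
    ((T₁₁ ∘L ContinuousLinearMap.fst ℂ H₁ H₂ + T₁₂ ∘L ContinuousLinearMap.snd ℂ H₁ H₂).prod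
      (T₂₁ ∘L ContinuousLinearMap.fst ℂ H₁ H₂ + T₂₂ ∘L ContinuousLinearMap.snd ℂ H₁ H₂)) ∘L
    ((WithLp.prodContinuousLinearEquiv 2 ℂ H₁ H₂) : WithLp 2 (H₁ × H₂) →L[ℂ] H₁ × H₂)

section NumRadius

variable {E : Type*} [NormedAddCommGroup E] [InnerProductSpace ℂ E]

lemma numRadius_nonneg (S : E →L[ℂ] E) : 0 ≤ numRadius S :=
  Real.iSup_nonneg fun _ => norm_nonneg _

lemma bddAbove_range_norm_inner_apply_self (S : E →L[ℂ] E) :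
    BddAbove (Set.range fun x : {x : E // ‖x‖ = 1} => ‖(⟪S x.1, x.1⟫_ℂ : ℂ)‖) := by
  refine ⟨‖S‖, ?_⟩
  rintro _ ⟨⟨x, hx⟩, rfl⟩
  calc ‖(⟪S x, x⟫_ℂ : ℂ)‖ ≤ ‖S x‖ * ‖x‖ := norm_inner_le_norm _ _
    _ ≤ ‖S‖ * ‖x‖ * ‖x‖ := by gcongr; exact S.le_opNorm x
    _ = ‖S‖ := by rw [hx, mul_one, mul_one]

lemma norm_inner_apply_self_le_numRadius_mul_sq (S : E →L[ℂ] E) (x : E) :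
    ‖(⟪S x, x⟫_ℂ : ℂ)‖ ≤ numRadius S * ‖x‖ ^ 2 := by
  rcases eq_or_ne x 0 with rfl | hx
  · simp
  have hx' : ‖x‖ ≠ 0 := norm_ne_zero_iff.mpr hx
  set c : ℂ := ((‖x‖ : ℂ))⁻¹
  have hc : ‖c‖ = ‖x‖⁻¹ := by rw [norm_inv, Complex.norm_real, norm_norm]
  have hunit : ‖c • x‖ = 1 := by rw [norm_smul, hc, inv_mul_cancel₀ hx']
  have hscale : ‖(⟪S (c • x), c • x⟫_ℂ : ℂ)‖ = ‖x‖⁻¹ ^ 2 * ‖(⟪S x, x⟫_ℂ : ℂ)‖ := by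
    rw [map_smul, inner_smul_left, inner_smul_right, norm_mul, norm_mul, RCLike.norm_conj, hc]
    ring
  have hle : ‖(⟪S (c • x), c • x⟫_ℂ : ℂ)‖ ≤ numRadius S :=
    le_ciSup (bddAbove_range_norm_inner_apply_self S) ⟨c • x, hunit⟩
  rw [hscale, inv_pow, inv_mul_le_iff₀ (by positivity)] at hle
  linarith

lemma norm_inner_apply_self_add_sq_le (S : E →L[ℂ] E) (x : E) :
    ‖(⟪S x, x⟫_ℂ : ℂ)‖ + ‖S x‖ ^ 2 ≤ (numRadius S + ‖S‖ ^ 2) * ‖x‖ ^ 2 := by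
  have hnorm : ‖S x‖ ^ 2 ≤ ‖S‖ ^ 2 * ‖x‖ ^ 2 := by
    rw [← mul_pow]; gcongr; exact S.le_opNorm x
  linarith [norm_inner_apply_self_le_numRadius_mul_sq S x]

lemma dwRadius_le_of_norm_inner_apply_self_add_sq_le (S : E →L[ℂ] E) {M : ℝ} (hM : 0 ≤ M)
    (h : ∀ x : E, ‖x‖ = 1 → ‖(⟪S x, x⟫_ℂ : ℂ)‖ + ‖S x‖ ^ 2 ≤ M) : dwRadius S ≤ M := by
  refine Real.iSup_le (fun ⟨x, hx⟩ => ?_) hM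
  have ha : 0 ≤ ‖(⟪S x, x⟫_ℂ : ℂ)‖ := norm_nonneg _
  have hb : 0 ≤ ‖S x‖ ^ 2 := sq_nonneg _
  calc Real.sqrt (‖(⟪S x, x⟫_ℂ : ℂ)‖ ^ 2 + ‖S x‖ ^ 4)
      ≤ Real.sqrt ((‖(⟪S x, x⟫_ℂ : ℂ)‖ + ‖S x‖ ^ 2) ^ 2) :=
        Real.sqrt_le_sqrt (by nlinarith [mul_nonneg ha hb])
    _ = ‖(⟪S x, x⟫_ℂ : ℂ)‖ + ‖S x‖ ^ 2 := Real.sqrt_sq (by positivity)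
    _ ≤ M := h x hx

end NumRadius

section BlockDiagonal

variable {E F : Type*} [NormedAddCommGroup E] [InnerProductSpace ℂ E]
  [NormedAddCommGroup F] [InnerProductSpace ℂ F] (A : E →L[ℂ] E) (B : F →L[ℂ] F)
  (x : WithLp 2 (E × F))

@[simp]
lemma blockOp2_diag_apply_fst : (blockOp2 A 0 0 B x).fst = A x.fst := by
  simp [blockOp2]

@[simp]
lemma blockOp2_diag_apply_snd : (blockOp2 A 0 0 B x).snd = B x.snd := by
  simp [blockOp2]

lemma inner_blockOp2_diag_apply_self :
    (⟪blockOp2 A 0 0 B x, x⟫_ℂ : ℂ) = ⟪A x.fst, x.fst⟫_ℂ + ⟪B x.snd, x.snd⟫_ℂ := by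
  simp only [WithLp.prod_inner_apply, WithLp.ofLp_fst, WithLp.ofLp_snd, blockOp2_diag_apply_fst,
    blockOp2_diag_apply_snd]

lemma norm_blockOp2_diag_apply_sq :
    ‖blockOp2 A 0 0 B x‖ ^ 2 = ‖A x.fst‖ ^ 2 + ‖B x.snd‖ ^ 2 := by
  rw [WithLp.prod_norm_sq_eq_of_L2, blockOp2_diag_apply_fst, blockOp2_diag_apply_snd]

end BlockDiagonal

theorem dw_blockDiag2_le (T₁₁ : H₁ →L[ℂ] H₁) (T₂₂ : H₂ →L[ℂ] H₂) :
    dwRadius (blockOp2 T₁₁ 0 0 T₂₂) ≤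
      max (numRadius T₁₁ + ‖T₁₁‖ ^ 2) (numRadius T₂₂ + ‖T₂₂‖ ^ 2) := by
  set M := max (numRadius T₁₁ + ‖T₁₁‖ ^ 2) (numRadius T₂₂ + ‖T₂₂‖ ^ 2)
  have hM : 0 ≤ M :=
    (add_nonneg (numRadius_nonneg T₁₁) (sq_nonneg _)).trans (le_max_left _ _)
  refine dwRadius_le_of_norm_inner_apply_self_add_sq_le _ hM fun x hx => ?_
  have hsplit : ‖x.fst‖ ^ 2 + ‖x.snd‖ ^ 2 = 1 := by
    rw [← WithLp.prod_norm_sq_eq_of_L2, hx, one_pow]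
  have h₁ := norm_inner_apply_self_add_sq_le T₁₁ x.fst
  have h₂ := norm_inner_apply_self_add_sq_le T₂₂ x.snd
  calc ‖(⟪blockOp2 T₁₁ 0 0 T₂₂ x, x⟫_ℂ : ℂ)‖ + ‖blockOp2 T₁₁ 0 0 T₂₂ x‖ ^ 2
      ≤ (‖(⟪T₁₁ x.fst, x.fst⟫_ℂ : ℂ)‖ + ‖T₁₁ x.fst‖ ^ 2)
        + (‖(⟪T₂₂ x.snd, x.snd⟫_ℂ : ℂ)‖ + ‖T₂₂ x.snd‖ ^ 2) := by
        rw [inner_blockOp2_diag_apply_self, norm_blockOp2_diag_apply_sq]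
        linarith [norm_add_le (⟪T₁₁ x.fst, x.fst⟫_ℂ : ℂ) ⟪T₂₂ x.snd, x.snd⟫_ℂ]
    _ ≤ M * ‖x.fst‖ ^ 2 + M * ‖x.snd‖ ^ 2 := by
        gcongr
        · exact h₁.trans (by gcongr; exact le_max_left _ _)
        · exact h₂.trans (by gcongr; exact le_max_right _ _)
    _ = M := by rw [← mul_add, hsplit, mul_one]
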